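/- Extension lemma: every irreducible discrete subcopula D*: J_M^(1) × ⋯ × J_M^(L) → I_M can be extended to an irreducible discrete copula D: I_M^L → I_M with D restricted to J_M^(1) × ⋯ × J_M^(L) equal to D*. -/

import Mathlib

open Finset

/-- The sign `(-1)^{#{ℓ : ε ℓ = false}}` appearing in `L`-fold first-order differences. -/
def boxSign {L : ℕ} (ε : Fin L → Bool) : ℝ :=
  (-1 : ℝ) ^ (Finset.univ.filter (fun ℓ => ε ℓ = false)).card

/-- `D` is a discrete copula on `I_M^L`: the lattice point `(i₁/M, …, i_L/M)` is encoded
by an index vector `i : Fin L → ℕ` with `i ℓ ≤ M`.  The conditions are: values in `[0,1]`,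
groundedness (D1), uniform margins (D2), and `L`-increasingness over unit lattice boxes (D3). -/
def IsDiscreteCopula (M L : ℕ) (D : (Fin L → ℕ) → ℝ) : Prop :=
  (∀ i : Fin L → ℕ, (∀ ℓ, i ℓ ≤ M) → D i ∈ Set.Icc (0 : ℝ) 1) ∧
  (∀ i : Fin L → ℕ, (∀ ℓ, i ℓ ≤ M) → (∃ ℓ, i ℓ = 0) → D i = 0) ∧
  (∀ ℓ : Fin L, ∀ k : ℕ, k ≤ M →
    D (fun l => if l = ℓ then k else M) = (k : ℝ) / M) ∧
  (∀ i : Fin L → ℕ, (∀ ℓ, 1 ≤ i ℓ ∧ i ℓ ≤ M) →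
    0 ≤ ∑ ε : Fin L → Bool,
        boxSign ε * D (fun ℓ => if ε ℓ then i ℓ else i ℓ - 1))

/-- An irreducible discrete copula: a discrete copula whose range on the lattice is exactly
`I_M = {0, 1/M, …, 1}`. -/
def IsIrreducibleDiscreteCopula (M L : ℕ) (D : (Fin L → ℕ) → ℝ) : Prop :=
  IsDiscreteCopula M L D ∧
  (∀ i : Fin L → ℕ, (∀ ℓ, i ℓ ≤ M) → ∃ k ≤ M, D i = (k : ℝ) / M) ∧
  (∀ k : ℕ, k ≤ M → ∃ i : Fin L → ℕ, (∀ ℓ, i ℓ ≤ M) ∧ D i = (k : ℝ) / M)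

/-- A discrete subcopula on the grid `∏ℓ Jℓ` (each `J ℓ ⊆ {0,…,M}` containing `0` and `M`,
encoding `J_M^(ℓ) ⊆ I_M` containing `0` and `1`): (S1) groundedness, (S2) uniform margins
on the grid, (S3) nonnegative `L`-fold differences over grid boxes. -/
def IsDiscreteSubcopula (M L : ℕ) (J : Fin L → Finset ℕ) (D : (Fin L → ℕ) → ℝ) : Prop :=
  (∀ i : Fin L → ℕ, (∀ ℓ, i ℓ ∈ J ℓ) → (∃ ℓ, i ℓ = 0) → D i = 0) ∧
  (∀ ℓ : Fin L, ∀ k ∈ J ℓ,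
    D (fun l => if l = ℓ then k else M) = (k : ℝ) / M) ∧
  (∀ i j : Fin L → ℕ, (∀ ℓ, i ℓ ∈ J ℓ) → (∀ ℓ, j ℓ ∈ J ℓ) → (∀ ℓ, i ℓ ≤ j ℓ) →
    0 ≤ ∑ ε : Fin L → Bool,
        boxSign ε * D (fun ℓ => if ε ℓ then j ℓ else i ℓ))

/-!
Each cell `∏ ℓ (gridPred s_ℓ, s_ℓ]` of the grid carries the `L`-fold difference of `D*` over it,
a nonnegative multiple of `1/M` by (S3) and irreducibility, so it can be replaced by that many
atoms of mass `1/M`. By (S2) the cells of the slab `{b_ℓ = s}` carry exactly `s - gridPred s`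
atoms, so the atoms of each slab can be given distinct `ℓ`-th coordinates in `(gridPred s, s]`;
then every coordinate maps the `M` atoms bijectively onto `{1, …, M}`. The distribution function
of such a configuration is an irreducible discrete copula, and at a grid point it only sees which
cells lie below that point, so by inclusion–exclusion it agrees with `D*` on the grid.
-/

lemma Finset.exists_bijOn_biUnion_of_card_fiber_eq {α β γ : Type*} [DecidableEq β]
    [DecidableEq γ] [Nonempty γ] {P : Finset α} {g : α → β} {S : Finset β} {T : β → Finset γ}
    (hg : ∀ p ∈ P, g p ∈ S) (hT : (S : Set β).PairwiseDisjoint T)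
    (hcard : ∀ s ∈ S, (P.filter (g · = s)).card = (T s).card) :
    ∃ x : α → γ, Set.BijOn x P (S.biUnion T) ∧ ∀ p ∈ P, x p ∈ T (g p) := by
  have hfiber : ∀ s ∈ S, ∃ e : α → γ, Set.BijOn e (P.filter (g · = s)) (T s) := fun s hs =>
    (P.filter (g · = s)).finite_toSet.exists_bijOn_of_encard_eq (by
      rw [Set.encard_coe_eq_coe_finsetCard, Set.encard_coe_eq_coe_finsetCard, hcard s hs])
  choose! e he using hfiber
  have hmem : ∀ p ∈ P, e (g p) p ∈ T (g p) := fun p hp =>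
    (he _ (hg p hp)).mapsTo (by simp [hp])
  refine ⟨fun p => e (g p) p, ⟨fun p hp => ?_, fun p hp q hq hpq => ?_, fun y hy => ?_⟩, hmem⟩
  · exact mem_biUnion.2 ⟨g p, hg p hp, hmem p hp⟩
  · rw [mem_coe] at hp hq
    by_cases hgpq : g p = g q
    · exact (he _ (hg p hp)).injOn (by simp [hp]) (by simp [hq, hgpq]) (by simpa [hgpq] using hpq)
    · have hpT : e (g q) q ∈ T (g p) := (show e (g p) p = e (g q) q from hpq) ▸ hmem p hp
      exact (disjoint_left.1 (hT (hg p hp) (hg q hq) hgpq) hpT (hmem q hq)).elim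
  · obtain ⟨s, hs, hys⟩ := mem_biUnion.1 hy
    obtain ⟨p, hp, rfl⟩ := (he s hs).surjOn hys
    obtain ⟨hpP, rfl⟩ := mem_filter.1 hp
    exact ⟨p, hpP, rfl⟩

section BoxDifference

variable {L : ℕ}

def boxDiff (F : (Fin L → ℕ) → ℝ) (v u : Fin L → ℕ) : ℝ :=
  ∑ ε : Fin L → Bool, boxSign ε * F (fun ℓ => if ε ℓ then u ℓ else v ℓ)

lemma boxSign_eq_prod (ε : Fin L → Bool) :
    boxSign ε = ∏ ℓ, (if ε ℓ then (1 : ℝ) else -1) := by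
  rw [prod_ite, prod_const, prod_const, one_pow, one_mul, boxSign]
  simp

lemma prod_sub_eq_sum_boxSign (a b : Fin L → ℝ) :
    ∏ ℓ, (a ℓ - b ℓ) = ∑ ε : Fin L → Bool, boxSign ε * ∏ ℓ, (if ε ℓ then a ℓ else b ℓ) := by
  have h : ∀ ℓ, a ℓ - b ℓ = ∑ e : Bool, (if e then a ℓ else -b ℓ) := fun ℓ => by
    simp [sub_eq_add_neg]
  simp_rw [h, prod_univ_sum, Fintype.piFinset_univ, boxSign_eq_prod,
    ← prod_mul_distrib]
  refine sum_congr rfl fun ε _ => prod_congr rfl fun ℓ _ => ?_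
  cases ε ℓ <;> simp

lemma boxDiff_prod (f : Fin L → ℕ → ℝ) (v u : Fin L → ℕ) :
    boxDiff (fun i => ∏ ℓ, f ℓ (i ℓ)) v u = ∏ ℓ, (f ℓ (u ℓ) - f ℓ (v ℓ)) := by
  rw [prod_sub_eq_sum_boxSign, boxDiff]
  refine sum_congr rfl fun ε _ => congrArg _ (prod_congr rfl fun ℓ _ => ?_)
  split_ifs <;> simp [*]

lemma boxDiff_sum {α : Type*} (s : Finset α) (G : α → (Fin L → ℕ) → ℝ) (v u : Fin L → ℕ) :
    boxDiff (fun i => ∑ a ∈ s, G a i) v u = ∑ a ∈ s, boxDiff (G a) v u := by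
  simp only [boxDiff, mul_sum]
  exact sum_comm

lemma boxDiff_div_const (F : (Fin L → ℕ) → ℝ) (c : ℝ) (v u : Fin L → ℕ) :
    boxDiff (fun i => F i / c) v u = boxDiff F v u / c := by
  simp only [boxDiff, sum_div, mul_div_assoc]

lemma boxDiff_eq_sum_piFinset (F : (Fin L → ℕ) → ℝ) (T : Fin L → Finset ℕ) (v u : Fin L → ℕ)
    (hv : ∀ ℓ, v ℓ ∈ T ℓ) (hu : ∀ ℓ, u ℓ ∈ T ℓ) :
    boxDiff F v u = ∑ j ∈ Fintype.piFinset T,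
      F j * ∏ ℓ, ((if j ℓ = u ℓ then 1 else 0) - (if j ℓ = v ℓ then 1 else 0)) := by
  have hcorner : ∀ j : Fin L → ℕ, ∀ ε : Fin L → Bool,
      (∏ ℓ, if ε ℓ then (if j ℓ = u ℓ then (1 : ℝ) else 0) else (if j ℓ = v ℓ then 1 else 0))
        = if j = (fun ℓ => if ε ℓ then u ℓ else v ℓ) then 1 else 0 := by
    intro j ε
    calc _ = ∏ ℓ, (if j ℓ = (if ε ℓ then u ℓ else v ℓ) then (1 : ℝ) else 0) :=
          prod_congr rfl fun ℓ _ => by split_ifs <;> rfl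
      _ = _ := by rw [Fintype.prod_boole]; congr 1; simp only [funext_iff]
  simp_rw [prod_sub_eq_sum_boxSign, hcorner, mul_sum, boxDiff]
  rw [sum_comm]
  refine sum_congr rfl fun ε _ => ?_
  simp_rw [mul_ite, mul_one, mul_zero, mul_comm (F _), sum_ite_eq']
  rw [if_pos (Fintype.mem_piFinset.2 fun ℓ => by split_ifs; exacts [hu ℓ, hv ℓ])]

end BoxDifference

section CountingCopula

variable {α : Type*} {M L : ℕ} {P : Finset α}

variable (M L) in
noncomputable def countingCDF (P : Finset α) (x : Fin L → α → ℕ) (i : Fin L → ℕ) : ℝ :=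
  (P.filter fun p => ∀ ℓ, x ℓ p ≤ i ℓ).card / M

lemma card_filter_le_eq_of_bijOn_Icc {f : α → ℕ} (hf : Set.BijOn f P (Icc 1 M)) {k : ℕ}
    (hk : k ≤ M) : (P.filter (f · ≤ k)).card = k := by
  have hcard := card_nbij (s := P.filter (f · ≤ k)) (t := Icc 1 k) f
    (fun p hp => by
      obtain ⟨hpP, hpk⟩ := mem_filter.1 hp
      exact mem_coe.2 (mem_Icc.2 ⟨(mem_Icc.1 (hf.mapsTo hpP)).1, hpk⟩))
    (hf.injOn.mono (coe_subset.2 (filter_subset _ _)))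
    (fun y hy => by
      simp only [coe_Icc, Set.mem_Icc] at hy
      obtain ⟨p, hp, rfl⟩ := hf.surjOn (by rw [coe_Icc]; exact ⟨hy.1, hy.2.trans hk⟩)
      exact ⟨p, mem_filter.2 ⟨hp, hy.2⟩, rfl⟩)
  rw [hcard, Nat.card_Icc, Nat.add_sub_cancel]

lemma boxDiff_countingCDF_nonneg (x : Fin L → α → ℕ) {v u : Fin L → ℕ} (hvu : ∀ ℓ, v ℓ ≤ u ℓ) :
    0 ≤ boxDiff (countingCDF M L P x) v u := by
  have hCDF : countingCDF M L P x
      = fun i => (∑ p ∈ P, ∏ ℓ, (if x ℓ p ≤ i ℓ then (1 : ℝ) else 0)) / M := by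
    ext i
    simp only [countingCDF, card_filter, Nat.cast_sum, Nat.cast_ite, Nat.cast_one,
      Nat.cast_zero, Fintype.prod_boole]
    exact congrArg (· / (M : ℝ)) (sum_congr rfl fun p _ => by
      split_ifs <;> simp_all)
  rw [hCDF, boxDiff_div_const, boxDiff_sum, sum_congr rfl fun p _ =>
    boxDiff_prod (fun ℓ n => if x ℓ p ≤ n then (1 : ℝ) else 0) v u]
  refine div_nonneg (sum_nonneg fun p _ => prod_nonneg fun ℓ _ => ?_) (Nat.cast_nonneg M)
  by_cases hu : x ℓ p ≤ u ℓ
  · rw [if_pos hu]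
    split_ifs <;> norm_num
  · have hv : ¬x ℓ p ≤ v ℓ := fun hv => hu (hv.trans (hvu ℓ))
    simp [hu, hv]

variable {x : Fin L → α → ℕ}

lemma countingCDF_margin (hx : ∀ ℓ, Set.BijOn (x ℓ) P (Icc 1 M)) (ℓ : Fin L) {k : ℕ}
    (hk : k ≤ M) : countingCDF M L P x (fun l => if l = ℓ then k else M) = k / M := by
  rw [countingCDF, filter_congr (q := (x ℓ · ≤ k)) fun p hp => ?_,
    card_filter_le_eq_of_bijOn_Icc (hx ℓ) hk]
  refine ⟨fun h => by simpa using h ℓ, fun h l => ?_⟩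
  split_ifs with hl
  · exact hl ▸ h
  · exact (mem_Icc.1 ((hx l).mapsTo hp)).2

theorem isIrreducibleDiscreteCopula_countingCDF [NeZero L]
    (hx : ∀ ℓ, Set.BijOn (x ℓ) P (Icc 1 M)) :
    IsIrreducibleDiscreteCopula M L (countingCDF M L P x) := by
  have hcard : ∀ i : Fin L → ℕ, (P.filter fun p => ∀ ℓ, x ℓ p ≤ i ℓ).card ≤ M := fun i =>
    (card_filter_le _ _).trans ((hx 0).finsetCard_eq.trans (Nat.card_Icc 1 M)).le
  refine ⟨⟨fun i _ => ⟨?_, ?_⟩, fun i _ ⟨ℓ, hℓ⟩ => ?_, fun ℓ k hk => countingCDF_margin hx ℓ hk,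
    fun i _ => boxDiff_countingCDF_nonneg x fun ℓ => Nat.sub_le _ _⟩,
    fun i _ => ⟨_, hcard i, rfl⟩,
    fun k hk => ⟨fun l => if l = 0 then k else M, fun l => by dsimp only; split_ifs <;> omega,
      countingCDF_margin hx 0 hk⟩⟩
  · exact div_nonneg (Nat.cast_nonneg _) (Nat.cast_nonneg _)
  · exact div_le_one_of_le₀ (by exact_mod_cast hcard i) (Nat.cast_nonneg _)
  · rw [countingCDF, filter_false_of_mem fun p hp h => ?_, card_empty,
      Nat.cast_zero, zero_div]
    have := (mem_Icc.1 ((hx ℓ).mapsTo hp)).1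
    have := h ℓ
    omega

end CountingCopula

section GridPred

variable {J : Finset ℕ}

noncomputable def gridPred (J : Finset ℕ) (k : ℕ) : ℕ :=
  Nat.findGreatest (· ∈ J) (k - 1)

lemma gridPred_mem (hJ0 : 0 ∈ J) (k : ℕ) : gridPred J k ∈ J :=
  Nat.findGreatest_spec (P := (· ∈ J)) (Nat.zero_le _) hJ0

lemma gridPred_lt {k : ℕ} (hk : 0 < k) : gridPred J k < k :=
  lt_of_le_of_lt (Nat.findGreatest_le _) (by omega)

lemma le_gridPred {t k : ℕ} (ht : t ∈ J) (htk : t < k) : t ≤ gridPred J k :=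
  Nat.le_findGreatest (by omega) ht

lemma filter_le_eq_insert_gridPred {T : ℕ} (hT : T ∈ J) (hT0 : T ≠ 0) :
    (J.erase 0).filter (· ≤ T) = insert T ((J.erase 0).filter (· ≤ gridPred J T)) := by
  ext k
  simp only [mem_insert, mem_filter, mem_erase]
  have hlt := gridPred_lt (J := J) (Nat.pos_of_ne_zero hT0)
  constructor
  · rintro ⟨⟨hk0, hkJ⟩, hkT⟩
    rcases hkT.eq_or_lt with rfl | hkT
    · exact Or.inl rfl
    · exact Or.inr ⟨⟨hk0, hkJ⟩, le_gridPred hkJ hkT⟩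
  · rintro (rfl | ⟨hk, hkT⟩)
    · exact ⟨⟨hT0, hT⟩, le_rfl⟩
    · exact ⟨hk, by omega⟩

lemma sum_filter_le_sub_gridPred {G : Type*} [AddCommGroup G] (hJ0 : 0 ∈ J) (f : ℕ → G)
    {T : ℕ} (hT : T ∈ J) :
    ∑ k ∈ (J.erase 0).filter (· ≤ T), (f k - f (gridPred J k)) = f T - f 0 := by
  induction T using Nat.strong_induction_on with
  | _ T ih =>
    rcases Nat.eq_zero_or_pos T with rfl | hT0
    · rw [sum_eq_zero fun k hk => ?_, sub_self]
      simp only [mem_filter, mem_erase] at hk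
      omega
    · have hlt := gridPred_lt (J := J) hT0
      rw [filter_le_eq_insert_gridPred hT hT0.ne', sum_insert (by simp; omega),
        ih _ hlt (gridPred_mem hJ0 T), sub_add_sub_cancel]

lemma biUnion_Ioc_gridPred {M : ℕ} (hJ0 : 0 ∈ J) (hJM : M ∈ J) (hJle : ∀ k ∈ J, k ≤ M) :
    (J.erase 0).biUnion (fun s => Ioc (gridPred J s) s) = Icc 1 M := by
  ext y
  simp only [mem_biUnion, mem_erase, mem_Ioc, mem_Icc]
  constructor
  · rintro ⟨s, ⟨-, hs⟩, hy, hys⟩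
    exact ⟨by omega, hys.trans (hJle s hs)⟩
  · rintro ⟨hy1, hyM⟩
    have hex : ∃ s, s ∈ J ∧ y ≤ s := ⟨M, hJM, hyM⟩
    obtain ⟨hsJ, hys⟩ := Nat.find_spec hex
    refine ⟨Nat.find hex, ⟨by omega, hsJ⟩, ?_, hys⟩
    by_contra! hpred
    exact Nat.find_min hex (gridPred_lt (J := J) (by omega)) ⟨gridPred_mem hJ0 _, hpred⟩

lemma pairwiseDisjoint_Ioc_gridPred :
    (J : Set ℕ).PairwiseDisjoint (fun s => Ioc (gridPred J s) s) := by
  intro s hs t ht hst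
  wlog h : s < t generalizing s t
  · exact (this ht hs hst.symm (by omega)).symm
  refine disjoint_left.2 fun y hys hyt => ?_
  have := le_gridPred (J := J) hs h
  simp only [mem_Ioc] at hys hyt
  omega

lemma le_iff_le_of_mem_Ioc_gridPred {y b t : ℕ} (hy : y ∈ Ioc (gridPred J b) b)
    (ht : t ∈ J) : y ≤ t ↔ b ≤ t := by
  rw [mem_Ioc] at hy
  refine ⟨fun hyt => ?_, hy.2.trans⟩
  by_contra! htb
  have := le_gridPred ht htb
  omega

end GridPred

section Cells

variable {L : ℕ} (J : Fin L → Finset ℕ)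

def gridCells : Finset (Fin L → ℕ) :=
  Fintype.piFinset fun ℓ => (J ℓ).erase 0

noncomputable def cellMass (F : (Fin L → ℕ) → ℝ) (b : Fin L → ℕ) : ℝ :=
  boxDiff F (fun ℓ => gridPred (J ℓ) (b ℓ)) b

variable {J}

lemma mem_of_mem_gridCells {b : Fin L → ℕ} (hb : b ∈ gridCells J) (ℓ : Fin L) : b ℓ ∈ J ℓ :=
  mem_of_mem_erase (Fintype.mem_piFinset.1 hb ℓ)

lemma pos_of_mem_gridCells {b : Fin L → ℕ} (hb : b ∈ gridCells J) (ℓ : Fin L) : 0 < b ℓ :=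
  Nat.pos_of_ne_zero (ne_of_mem_erase (Fintype.mem_piFinset.1 hb ℓ))

lemma filter_gridCells_le (i : Fin L → ℕ) :
    (gridCells J).filter (fun b => ∀ ℓ, b ℓ ≤ i ℓ)
      = Fintype.piFinset fun ℓ => ((J ℓ).erase 0).filter (· ≤ i ℓ) := by
  ext b
  simp only [gridCells, mem_filter, Fintype.mem_piFinset]
  exact forall_and.symm

/- Expanded over the grid points `j`, the coefficient of `F j` in the sum factorises over the
coordinates, and each factor telescopes along `J ℓ`. -/
lemma sum_cellMass_filter_le_eq_boxDiff (hJ0 : ∀ ℓ, 0 ∈ J ℓ) (F : (Fin L → ℕ) → ℝ)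
    {i : Fin L → ℕ} (hi : ∀ ℓ, i ℓ ∈ J ℓ) :
    ∑ b ∈ (gridCells J).filter (fun b => ∀ ℓ, b ℓ ≤ i ℓ), cellMass J F b = boxDiff F 0 i := by
  have hdelta : ∀ (ℓ : Fin L) (n : ℕ),
      ∑ k ∈ ((J ℓ).erase 0).filter (· ≤ i ℓ),
        ((if n = k then (1 : ℝ) else 0) - (if n = gridPred (J ℓ) k then 1 else 0))
        = (if n = i ℓ then 1 else 0) - (if n = 0 then 1 else 0) :=
    fun ℓ n => sum_filter_le_sub_gridPred (hJ0 ℓ) (fun k => if n = k then (1 : ℝ) else 0) (hi ℓ)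
  unfold cellMass
  rw [sum_congr rfl fun b hb => boxDiff_eq_sum_piFinset F J _ b
      (fun ℓ => gridPred_mem (hJ0 ℓ) _) (mem_of_mem_gridCells (mem_filter.1 hb).1),
    boxDiff_eq_sum_piFinset F J 0 i hJ0 hi, sum_comm]
  refine sum_congr rfl fun j _ => ?_
  rw [← mul_sum, filter_gridCells_le, ← prod_univ_sum _
    (fun ℓ k => (if j ℓ = k then (1 : ℝ) else 0) - if j ℓ = gridPred (J ℓ) k then 1 else 0)]
  simp only [hdelta, Pi.zero_apply]

lemma boxDiff_zero_left_of_grounded (hJ0 : ∀ ℓ, 0 ∈ J ℓ) {F : (Fin L → ℕ) → ℝ}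
    (hF : ∀ i : Fin L → ℕ, (∀ ℓ, i ℓ ∈ J ℓ) → (∃ ℓ, i ℓ = 0) → F i = 0)
    {i : Fin L → ℕ} (hi : ∀ ℓ, i ℓ ∈ J ℓ) :
    boxDiff F 0 i = F i := by
  rw [boxDiff, sum_eq_single (fun _ => true)]
  · simp [boxSign]
  · intro ε _ hε
    obtain ⟨ℓ, hℓ⟩ : ∃ ℓ, ε ℓ = false := by
      by_contra! h
      exact hε (funext fun ℓ => by simpa using h ℓ)
    rw [hF _ (fun ℓ => by split_ifs; exacts [hi ℓ, hJ0 ℓ]) ⟨ℓ, by simp [hℓ]⟩, mul_zero]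
  · simp

end Cells

section Extension

variable {M L : ℕ} {J : Fin L → Finset ℕ} {F : (Fin L → ℕ) → ℝ}

lemma cellMass_nonneg (hJ0 : ∀ ℓ, 0 ∈ J ℓ) (hF : IsDiscreteSubcopula M L J F)
    {b : Fin L → ℕ} (hb : b ∈ gridCells J) : 0 ≤ cellMass J F b :=
  hF.2.2 _ b (fun ℓ => gridPred_mem (hJ0 ℓ) _) (mem_of_mem_gridCells hb)
    (fun ℓ => (gridPred_lt (pos_of_mem_gridCells hb ℓ)).le)

lemma sum_cellMass_filter_le_eq (hJ0 : ∀ ℓ, 0 ∈ J ℓ) (hF : IsDiscreteSubcopula M L J F)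
    {i : Fin L → ℕ} (hi : ∀ ℓ, i ℓ ∈ J ℓ) :
    ∑ b ∈ (gridCells J).filter (fun b => ∀ ℓ, b ℓ ≤ i ℓ), cellMass J F b = F i := by
  rw [sum_cellMass_filter_le_eq_boxDiff hJ0 F hi, boxDiff_zero_left_of_grounded hJ0 hF.1 hi]

lemma sum_cellMass_filter_coord_le (hJ0 : ∀ ℓ, 0 ∈ J ℓ) (hJM : ∀ ℓ, M ∈ J ℓ)
    (hJle : ∀ ℓ, ∀ k ∈ J ℓ, k ≤ M) (hF : IsDiscreteSubcopula M L J F) (ℓ₀ : Fin L)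
    {t : ℕ} (ht : t ∈ J ℓ₀) :
    ∑ b ∈ (gridCells J).filter (fun b => b ℓ₀ ≤ t), cellMass J F b = t / M := by
  have hi : ∀ ℓ, (fun l => if l = ℓ₀ then t else M) ℓ ∈ J ℓ := fun ℓ => by
    dsimp only
    split_ifs with h
    exacts [h ▸ ht, hJM ℓ]
  rw [← hF.2.1 ℓ₀ t ht, ← sum_cellMass_filter_le_eq hJ0 hF hi]
  refine sum_congr (filter_congr fun b hb => ?_) fun _ _ => rfl
  refine ⟨fun h ℓ => ?_, fun h => by simpa using h ℓ₀⟩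
  split_ifs with hℓ
  exacts [hℓ ▸ h, hJle ℓ _ (mem_of_mem_gridCells hb ℓ)]

lemma sum_cellMass_filter_coord_eq (hJ0 : ∀ ℓ, 0 ∈ J ℓ) (hJM : ∀ ℓ, M ∈ J ℓ)
    (hJle : ∀ ℓ, ∀ k ∈ J ℓ, k ≤ M) (hF : IsDiscreteSubcopula M L J F) (ℓ₀ : Fin L)
    {s : ℕ} (hs : s ∈ J ℓ₀) (hs0 : 0 < s) :
    ∑ b ∈ (gridCells J).filter (fun b => b ℓ₀ = s), cellMass J F b
      = s / M - gridPred (J ℓ₀) s / M := by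
  have hsplit : (gridCells J).filter (fun b => b ℓ₀ ≤ s)
      = (gridCells J).filter (fun b => b ℓ₀ = s)
        ∪ (gridCells J).filter (fun b => b ℓ₀ ≤ gridPred (J ℓ₀) s) := by
    ext b
    simp only [mem_union, mem_filter]
    have := gridPred_lt (J := J ℓ₀) hs0
    constructor
    · rintro ⟨hb, hbs⟩
      rcases hbs.eq_or_lt with hbs | hbs
      · exact Or.inl ⟨hb, hbs⟩
      · exact Or.inr ⟨hb, le_gridPred (mem_of_mem_gridCells hb ℓ₀) hbs⟩
    · rintro (⟨hb, hbs⟩ | ⟨hb, hbs⟩) <;> exact ⟨hb, by omega⟩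
  have hdisj : Disjoint ((gridCells J).filter (fun b => b ℓ₀ = s))
      ((gridCells J).filter (fun b => b ℓ₀ ≤ gridPred (J ℓ₀) s)) := by
    rw [disjoint_filter]
    have := gridPred_lt (J := J ℓ₀) hs0
    intro b _ hb
    omega
  rw [eq_sub_iff_add_eq, ← sum_cellMass_filter_coord_le hJ0 hJM hJle hF ℓ₀ hs,
    ← sum_cellMass_filter_coord_le hJ0 hJM hJle hF ℓ₀ (gridPred_mem (hJ0 ℓ₀) s), hsplit,
    sum_union hdisj]

variable (M J F) in
noncomputable def cellCount (b : Fin L → ℕ) : ℕ :=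
  ⌊(M : ℝ) * cellMass J F b⌋₊

lemma natCast_cellCount (hM : 0 < M) (hJ0 : ∀ ℓ, 0 ∈ J ℓ) (hF : IsDiscreteSubcopula M L J F)
    (hFM : ∀ i : Fin L → ℕ, (∀ ℓ, i ℓ ∈ J ℓ) → ∃ k : ℕ, F i = k / M)
    {b : Fin L → ℕ} (hb : b ∈ gridCells J) :
    (cellCount M J F b : ℝ) = M * cellMass J F b := by
  have hcorner : ∀ ε : Fin L → Bool, ∀ ℓ,
      (fun ℓ => if ε ℓ then b ℓ else gridPred (J ℓ) (b ℓ)) ℓ ∈ J ℓ := fun ε ℓ => by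
    dsimp only
    split_ifs
    exacts [mem_of_mem_gridCells hb ℓ, gridPred_mem (hJ0 ℓ) _]
  choose k hk using fun ε => hFM _ (hcorner ε)
  -- `M * cellMass` is the same signed sum, of the integers `M * F` at the corners
  have hint : ((∑ ε : Fin L → Bool,
      (-1) ^ (univ.filter fun ℓ => ε ℓ = false).card * (k ε : ℤ) : ℤ) : ℝ)
        = M * cellMass J F b := by
    have hM0 : (M : ℝ) ≠ 0 := by positivity
    rw [cellMass, boxDiff, mul_sum]
    push_cast
    refine sum_congr rfl fun ε _ => ?_
    rw [hk ε, boxSign]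
    field_simp
  have hnonneg : (0 : ℝ) ≤ M * cellMass J F b :=
    mul_nonneg (Nat.cast_nonneg M) (cellMass_nonneg hJ0 hF hb)
  rw [← hint] at hnonneg ⊢
  obtain ⟨n, hn⟩ := Int.eq_ofNat_of_zero_le (Int.cast_nonneg_iff.1 hnonneg)
  rw [cellCount, ← hint, hn, Int.cast_natCast, Nat.floor_natCast]

lemma sum_cellCount_filter_coord_eq (hM : 0 < M) (hJ0 : ∀ ℓ, 0 ∈ J ℓ) (hJM : ∀ ℓ, M ∈ J ℓ)
    (hJle : ∀ ℓ, ∀ k ∈ J ℓ, k ≤ M) (hF : IsDiscreteSubcopula M L J F)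
    (hFM : ∀ i : Fin L → ℕ, (∀ ℓ, i ℓ ∈ J ℓ) → ∃ k : ℕ, F i = k / M) (ℓ₀ : Fin L)
    {s : ℕ} (hs : s ∈ J ℓ₀) (hs0 : 0 < s) :
    ∑ b ∈ (gridCells J).filter (fun b => b ℓ₀ = s), cellCount M J F b
      = s - gridPred (J ℓ₀) s := by
  have hM0 : (M : ℝ) ≠ 0 := by positivity
  apply Nat.cast_injective (R := ℝ)
  rw [Nat.cast_sum, Nat.cast_sub (gridPred_lt hs0).le,
    sum_congr rfl fun b hb => natCast_cellCount hM hJ0 hF hFM (mem_filter.1 hb).1,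
    ← mul_sum, sum_cellMass_filter_coord_eq hJ0 hJM hJle hF ℓ₀ hs hs0]
  field_simp

variable (M J F) in
noncomputable def cellPoints : Finset ((_ : Fin L → ℕ) × ℕ) :=
  (gridCells J).sigma fun b => range (cellCount M J F b)

lemma card_cellPoints_filter (p : (Fin L → ℕ) → Prop) [DecidablePred p] :
    ((cellPoints M J F).filter fun q => p q.1).card
      = ∑ b ∈ (gridCells J).filter p, cellCount M J F b := by
  rw [cellPoints, filter_sigma, card_sigma, sum_filter]
  refine sum_congr rfl fun b _ => ?_
  split_ifs with h <;> simp [h]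

lemma exists_bijOn_coords_cellPoints (hM : 0 < M) (hJ0 : ∀ ℓ, 0 ∈ J ℓ) (hJM : ∀ ℓ, M ∈ J ℓ)
    (hJle : ∀ ℓ, ∀ k ∈ J ℓ, k ≤ M) (hF : IsDiscreteSubcopula M L J F)
    (hFM : ∀ i : Fin L → ℕ, (∀ ℓ, i ℓ ∈ J ℓ) → ∃ k : ℕ, F i = k / M) :
    ∃ x : Fin L → (_ : Fin L → ℕ) × ℕ → ℕ, ∀ ℓ,
      Set.BijOn (x ℓ) (cellPoints M J F) (Icc 1 M) ∧
      ∀ q ∈ cellPoints M J F, x ℓ q ∈ Ioc (gridPred (J ℓ) (q.1 ℓ)) (q.1 ℓ) := by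
  have hcoord : ∀ ℓ, ∃ xℓ : (_ : Fin L → ℕ) × ℕ → ℕ,
      Set.BijOn xℓ (cellPoints M J F) (Icc 1 M) ∧
      ∀ q ∈ cellPoints M J F, xℓ q ∈ Ioc (gridPred (J ℓ) (q.1 ℓ)) (q.1 ℓ) := by
    intro ℓ
    rw [← biUnion_Ioc_gridPred (hJ0 ℓ) (hJM ℓ) (hJle ℓ)]
    refine Finset.exists_bijOn_biUnion_of_card_fiber_eq
      (g := fun q : (_ : Fin L → ℕ) × ℕ => q.1 ℓ)
      (fun q hq => Fintype.mem_piFinset.1 (mem_sigma.1 hq).1 ℓ)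
      (pairwiseDisjoint_Ioc_gridPred.subset (coe_subset.2 (erase_subset _ _)))
      fun s hs => ?_
    obtain ⟨hs0, hs⟩ := mem_erase.1 hs
    rw [card_cellPoints_filter (fun b => b ℓ = s),
      sum_cellCount_filter_coord_eq hM hJ0 hJM hJle hF hFM ℓ hs (Nat.pos_of_ne_zero hs0),
      Nat.card_Ioc]
  choose x hx using hcoord
  exact ⟨x, hx⟩

lemma countingCDF_cellPoints_eq_of_mem_grid (hM : 0 < M) (hJ0 : ∀ ℓ, 0 ∈ J ℓ)
    (hF : IsDiscreteSubcopula M L J F)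
    (hFM : ∀ i : Fin L → ℕ, (∀ ℓ, i ℓ ∈ J ℓ) → ∃ k : ℕ, F i = k / M)
    {x : Fin L → (_ : Fin L → ℕ) × ℕ → ℕ}
    (hx : ∀ ℓ, ∀ q ∈ cellPoints M J F, x ℓ q ∈ Ioc (gridPred (J ℓ) (q.1 ℓ)) (q.1 ℓ))
    {i : Fin L → ℕ} (hi : ∀ ℓ, i ℓ ∈ J ℓ) :
    countingCDF M L (cellPoints M J F) x i = F i := by
  have hM0 : (M : ℝ) ≠ 0 := by positivity
  rw [countingCDF, filter_congr (q := fun q => ∀ ℓ, q.1 ℓ ≤ i ℓ) fun q hq =>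
      forall_congr' fun ℓ => le_iff_le_of_mem_Ioc_gridPred (hx ℓ q hq) (hi ℓ),
    card_cellPoints_filter (fun b => ∀ ℓ, b ℓ ≤ i ℓ), Nat.cast_sum,
    sum_congr rfl fun b hb => natCast_cellCount hM hJ0 hF hFM (mem_filter.1 hb).1,
    ← mul_sum, sum_cellMass_filter_le_eq hJ0 hF hi]
  field_simp

end Extension

theorem subcopula_extension_general (M L : ℕ) (hM : 0 < M) (hL : 2 ≤ L)
    (J : Fin L → Finset ℕ)
    (hJ0 : ∀ ℓ, 0 ∈ J ℓ) (hJM : ∀ ℓ, M ∈ J ℓ) (hJle : ∀ ℓ, ∀ k ∈ J ℓ, k ≤ M)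
    (Dstar : (Fin L → ℕ) → ℝ)
    (hsub : IsDiscreteSubcopula M L J Dstar)
    (hirr₁ : ∀ i : Fin L → ℕ, (∀ ℓ, i ℓ ∈ J ℓ) → ∃ k ≤ M, Dstar i = (k : ℝ) / M) :
    ∃ D : (Fin L → ℕ) → ℝ, IsIrreducibleDiscreteCopula M L D ∧
      ∀ i : Fin L → ℕ, (∀ ℓ, i ℓ ∈ J ℓ) → D i = Dstar i := by
  have hDM : ∀ i : Fin L → ℕ, (∀ ℓ, i ℓ ∈ J ℓ) → ∃ k : ℕ, Dstar i = k / M := fun i hi =>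
    (hirr₁ i hi).imp fun _ hk => hk.2
  obtain ⟨x, hx⟩ := exists_bijOn_coords_cellPoints hM hJ0 hJM hJle hsub hDM
  have : NeZero L := ⟨by omega⟩
  exact ⟨countingCDF M L (cellPoints M J Dstar) x,
    isIrreducibleDiscreteCopula_countingCDF fun ℓ => (hx ℓ).1,
    fun i hi => countingCDF_cellPoints_eq_of_mem_grid hM hJ0 hsub hDM (fun ℓ => (hx ℓ).2) hi⟩

/-- extension lemma: every irreducible discrete subcopula on a grid
`∏ℓ J_M^(ℓ)` extends to an irreducible discrete copula on `I_M^L`. -/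
theorem subcopula_extension (M L : ℕ) (hM : 0 < M) (hL : 2 ≤ L)
    (J : Fin L → Finset ℕ)
    (hJ0 : ∀ ℓ, 0 ∈ J ℓ) (hJM : ∀ ℓ, M ∈ J ℓ) (hJle : ∀ ℓ, ∀ k ∈ J ℓ, k ≤ M)
    (Dstar : (Fin L → ℕ) → ℝ)
    (hsub : IsDiscreteSubcopula M L J Dstar)
    (hirr₁ : ∀ i : Fin L → ℕ, (∀ ℓ, i ℓ ∈ J ℓ) → ∃ k ≤ M, Dstar i = (k : ℝ) / M)
    (hirr₂ : ∀ k : ℕ, k ≤ M → ∃ i : Fin L → ℕ, (∀ ℓ, i ℓ ∈ J ℓ) ∧ Dstar i = (k : ℝ) / M) :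
    ∃ D : (Fin L → ℕ) → ℝ, IsIrreducibleDiscreteCopula M L D ∧
      ∀ i : Fin L → ℕ, (∀ ℓ, i ℓ ∈ J ℓ) → D i = Dstar i :=
  subcopula_extension_general M L hM hL J hJ0 hJM hJle Dstar hsub hirr₁
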